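/- Let θ be a nonempty rim with θ̂ ≠ ∅ whose north-east arm is not connected to θ̂, and set a = |θ| - |θ̂|. Then for every integer p ≥ 1: if p < a then B(θ,p) = 0, and if p ≥ a then B(θ,p) = (2 - δ_{p,a})·(B(θ̂,p-a) - B(θ̂,p-a+1)) + (1 - δ_{a,1})·(B(θ̂,p-a+2) - B(θ̂,p-a+1)), where δ denotes the Kronecker delta. -/

import Mathlib

/-- `hcoef a b = Σ_{j=0}^{min(a,b)} (-1)^j 2^{a-j} binom(a,j)`; it is `0` when `b < 0`. -/
def hcoef (a : ℕ) (b : ℤ) : ℤ :=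
  ∑ j ∈ Finset.range (a + 1),
    if (j : ℤ) ≤ b then (-1) ^ j * 2 ^ (a - j) * (a.choose j) else 0

attribute [local instance] Classical.propDecidable

/-- The south-east corners of a finite set of boxes: boxes `(i,j)` such that
neither `(i+1,j)` nor `(i,j+1)` belongs to the set. -/
def seCorners (θ : Finset (ℤ × ℤ)) : Finset (ℤ × ℤ) :=
  θ.filter fun b => (b.1 + 1, b.2) ∉ θ ∧ (b.1, b.2 + 1) ∉ θ

/-- The south-east rim of `θ`: boxes `(i,j) ∈ θ` such that no box `(i',j') ∈ θ`
has `i' > i` and `j' > j`. -/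
def seRim (θ : Finset (ℤ × ℤ)) : Finset (ℤ × ℤ) :=
  θ.filter fun b => ∀ b' ∈ θ, ¬ (b.1 < b'.1 ∧ b.2 < b'.2)

/-- `d(θ)`: the number of boxes in the south-east rim of `θ`. -/
def dRim (θ : Finset (ℤ × ℤ)) : ℕ := (seRim θ).card

/-- `θ` is a rim if it equals its own south-east rim. -/
def IsRim (θ : Finset (ℤ × ℤ)) : Prop := θ = seRim θ

/-- Two boxes are adjacent (connected) if they share a side. -/
def Adjacent (b b' : ℤ × ℤ) : Prop := |b.1 - b'.1| + |b.2 - b'.2| = 1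

/-- `b'` can be reached from `b` by a chain of adjacent boxes of `θ`. -/
def Reach (θ : Finset (ℤ × ℤ)) (b b' : ℤ × ℤ) : Prop :=
  Relation.ReflTransGen (fun x y => y ∈ θ ∧ Adjacent x y) b b'

/-- The connected components of `θ`. -/
noncomputable def comps (θ : Finset (ℤ × ℤ)) : Finset (Finset (ℤ × ℤ)) :=
  θ.image fun b => θ.filter fun b' => Reach θ b b'

/-- `N(θ)`: the number of connected components of `θ`. -/
noncomputable def Ncomp (θ : Finset (ℤ × ℤ)) : ℕ := (comps θ).card

/-- `N⁻(θ) = max(N(θ) - 1, 0)`. -/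
noncomputable def Nminus (θ : Finset (ℤ × ℤ)) : ℕ := Ncomp θ - 1

/-- `N'(θ)`: the number of connected components of `θ` containing no diagonal box. -/
noncomputable def Nprime (θ : Finset (ℤ × ℤ)) : ℕ :=
  ((comps θ).filter fun c => ∀ b ∈ c, b.1 ≠ b.2).card

/-- `B(θ,p) = Σ_S (-1)^{|S|} h(N⁻(θ∖S), d(θ∖S) - p)`, the sum over subsets `S`
of the set of south-east corners of `θ`. -/
noncomputable def Bcoef (θ : Finset (ℤ × ℤ)) (p : ℤ) : ℤ :=
  ∑ S ∈ (seCorners θ).powerset,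
    (-1) ^ S.card * hcoef (Nminus (θ \ S)) ((dRim (θ \ S) : ℤ) - p)

/-- `C(θ,p) = Σ_S (-1)^{|S|} h(N'(θ∖S), d(θ∖S) - p)`, the sum over subsets `S`
of the set of south-east corners of `θ`. -/
noncomputable def Ccoef (θ : Finset (ℤ × ℤ)) (p : ℤ) : ℤ :=
  ∑ S ∈ (seCorners θ).powerset,
    (-1) ^ S.card * hcoef (Nprime (θ \ S)) ((dRim (θ \ S) : ℤ) - p)

/-- A strict partition with largest part at most `n`, encoded as a function
with `lam i = 0` for `i` beyond the length. -/
def IsStrictPartition (n : ℕ) (lam : ℤ → ℤ) : Prop :=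
  lam 1 ≤ (n : ℤ) ∧ (∀ i : ℤ, 1 ≤ i → 0 ≤ lam i) ∧
  (∀ i : ℤ, 1 ≤ i → lam (i + 1) = 0 ∨ lam (i + 1) < lam i)

/-- The shifted Young diagram `{(i,j) : 1 ≤ i ≤ ℓ, i ≤ j ≤ λ_i + i - 1}` of a
strict partition. -/
noncomputable def shiftedD (n : ℕ) (lam : ℤ → ℤ) : Finset (ℤ × ℤ) :=
  (Finset.Icc (1 : ℤ) (n : ℤ) ×ˢ Finset.Icc (1 : ℤ) (2 * (n : ℤ))).filter
    fun b => b.1 ≤ b.2 ∧ b.2 ≤ lam b.1 + b.1 - 1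

/-- `θ` is a shifted skew diagram: `θ = ν/λ` for strict partitions `λ ⊆ ν`
with `ν_1 ≤ n`. -/
def IsShiftedSkewDiagram (n : ℕ) (θ : Finset (ℤ × ℤ)) : Prop :=
  ∃ lam nu : ℤ → ℤ, IsStrictPartition n lam ∧ IsStrictPartition n nu ∧
    (∀ i : ℤ, 1 ≤ i → lam i ≤ nu i) ∧ θ = shiftedD n nu \ shiftedD n lam

/-- All boxes of `φ` lie in a single row. -/
def IsRow (φ : Finset (ℤ × ℤ)) : Prop := ∃ i : ℤ, ∀ b ∈ φ, b.1 = i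

/-- All boxes of `φ` lie in a single column. -/
def IsCol (φ : Finset (ℤ × ℤ)) : Prop := ∃ j : ℤ, ∀ b ∈ φ, b.2 = j

/-- `φ` is a row or a column. -/
def IsRowOrCol (φ : Finset (ℤ × ℤ)) : Prop := IsRow φ ∨ IsCol φ

/-- The intersection of `θ` with the `s × s` square whose upper-right box
is `(i0, j0)`. -/
def armAt (θ : Finset (ℤ × ℤ)) (i0 j0 : ℤ) (s : ℕ) : Finset (ℤ × ℤ) :=
  θ.filter fun b =>
    i0 ≤ b.1 ∧ b.1 ≤ i0 + (s : ℤ) - 1 ∧ j0 - (s : ℤ) + 1 ≤ b.2 ∧ b.2 ≤ j0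

/-!
The arm `A` and `θ̂` share no side, so the south-east corners of `θ` are those of `θ̂` together
with the south-east end `c` of the arm. Splitting the sum over `S` according to whether `c ∈ S`
writes `B(θ,p)` as two alternating sums over corners of `θ̂`, in which the arm contributes one
extra component and `a` boxes, resp. `a - 1` boxes (for `a = 1` the arm then disappears with its
component). Every subset of a rim is a rim, so `d(θ∖S) = |θ∖S|`, and the two sums become
`BcoefComp θ̂ (p - a)` and `BcoefComp θ̂ (p - a + 1)` (resp. `Bcoef θ̂ p`), where `BcoefComp` is
`Bcoef` with `N` in place of `N⁻`. The recursion `h(N,y) = 2 h(N-1,y) - h(N-1,y-1)` gives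
`BcoefComp θ̂ q = 2 B(θ̂,q) - B(θ̂,q+1)` for `q ≠ 0`, while for `q ≤ 0` all values of `h` in
`B(θ̂,q)` and `BcoefComp θ̂ q` equal `1` and the signs cancel.
-/

section Hcoef

theorem hcoef_of_le {a : ℕ} {b : ℤ} (hb : (a : ℤ) ≤ b) : hcoef a b = 1 := by
  have hsum : hcoef a b = ∑ j ∈ Finset.range (a + 1), (-1 : ℤ) ^ j * 2 ^ (a - j) * a.choose j :=
    Finset.sum_congr rfl fun j hj => if_pos (by have := Finset.mem_range.1 hj; omega)
  have h := add_pow (-1 : ℤ) 2 a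
  norm_num at h
  rw [hsum, ← h]

theorem hcoef_zero_left (b : ℤ) : hcoef 0 b = if 0 ≤ b then 1 else 0 := by
  simp [hcoef]

def hcoefTerm (a j : ℕ) : ℤ := (-1) ^ j * 2 ^ (a - j) * a.choose j

theorem hcoefTerm_succ_succ (a j : ℕ) :
    hcoefTerm (a + 1) (j + 1) = 2 * hcoefTerm a (j + 1) - hcoefTerm a j := by
  simp only [hcoefTerm, Nat.choose_succ_succ, Nat.cast_add]
  rcases Nat.lt_or_ge j a with h | h
  · rw [show a + 1 - (j + 1) = (a - (j + 1)) + 1 by omega, show a - j = (a - (j + 1)) + 1 by omega]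
    ring
  · rw [Nat.choose_eq_zero_of_lt (by omega : a < j + 1), show a + 1 - (j + 1) = 0 by omega,
      show a - j = 0 by omega]
    ring

theorem hcoef_eq_sum_range {a N : ℕ} (hN : a + 1 ≤ N) (b : ℤ) :
    hcoef a b = ∑ j ∈ Finset.range N, if (j : ℤ) ≤ b then hcoefTerm a j else 0 := by
  refine Finset.sum_subset (Finset.range_subset_range.2 hN) fun j _ hj => ?_
  simp [Nat.choose_eq_zero_of_lt (by simpa using hj : a < j)]

theorem hcoef_succ (a : ℕ) (b : ℤ) : hcoef (a + 1) b = 2 * hcoef a b - hcoef a (b - 1) := by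
  have hstep : ∀ j : ℕ, (if ((j + 1 : ℕ) : ℤ) ≤ b then hcoefTerm (a + 1) (j + 1) else 0) =
      2 * (if ((j + 1 : ℕ) : ℤ) ≤ b then hcoefTerm a (j + 1) else 0) -
        (if (j : ℤ) ≤ b - 1 then hcoefTerm a j else 0) := by
    intro j
    rw [hcoefTerm_succ_succ]
    split_ifs <;> push_cast at * <;> omega
  have hzero : hcoefTerm (a + 1) 0 = 2 * hcoefTerm a 0 := by simp [hcoefTerm, pow_succ, mul_comm]
  rw [hcoef_eq_sum_range le_rfl, hcoef_eq_sum_range (N := a + 1 + 1) (by omega) b,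
    hcoef_eq_sum_range le_rfl (b - 1), Finset.sum_range_succ', Finset.sum_range_succ' _ (a + 1),
    Finset.sum_congr rfl fun j _ => hstep j, Finset.sum_sub_distrib, ← Finset.mul_sum, hzero]
  split_ifs <;> ring

theorem hcoef_eq_two_mul_sub {N : ℕ} {b : ℤ} (h : N = 0 → b ≠ 0) :
    hcoef N b = 2 * hcoef (N - 1) b - hcoef (N - 1) (b - 1) := by
  rcases N with _ | N
  · simp only [Nat.zero_sub, hcoef_zero_left]
    have := h rfl
    split_ifs <;> omega
  · exact hcoef_succ N b

end Hcoef

section Components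

theorem Adjacent.symm {b b' : ℤ × ℤ} (h : Adjacent b b') : Adjacent b' b := by
  unfold Adjacent at *
  rwa [abs_sub_comm b'.1, abs_sub_comm b'.2]

theorem Reach.mem {θ : Finset (ℤ × ℤ)} {b x : ℤ × ℤ} (hb : b ∈ θ) (h : Reach θ b x) : x ∈ θ := by
  induction h with
  | refl => exact hb
  | tail _ hstep => exact hstep.1

theorem Reach.symm {θ : Finset (ℤ × ℤ)} {b x : ℤ × ℤ} (hb : b ∈ θ) (h : Reach θ b x) :
    Reach θ x b := by
  induction h with
  | refl => exact .refl
  | tail hbc hstep ih => exact .head ⟨Reach.mem hb hbc, hstep.2.symm⟩ ih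

theorem Reach.mono {θ θ' : Finset (ℤ × ℤ)} (hsub : θ ⊆ θ') {b x : ℤ × ℤ} (h : Reach θ b x) :
    Reach θ' b x :=
  Relation.ReflTransGen.mono (fun _ _ hstep => ⟨hsub hstep.1, hstep.2⟩) b x h

theorem ncomp_le_card (θ : Finset (ℤ × ℤ)) : Ncomp θ ≤ θ.card := Finset.card_image_le

theorem ncomp_eq_zero_iff {θ : Finset (ℤ × ℤ)} : Ncomp θ = 0 ↔ θ = ∅ := by
  simp [Ncomp, comps]

theorem ncomp_singleton (c : ℤ × ℤ) : Ncomp {c} = 1 := by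
  simp [Ncomp, comps]

theorem ncomp_eq_one {θ : Finset (ℤ × ℤ)} (hne : θ.Nonempty)
    (hreach : ∀ b ∈ θ, ∀ b' ∈ θ, Reach θ b b') : Ncomp θ = 1 := by
  rw [Ncomp, comps, Finset.image_congr fun b hb => Finset.filter_true_of_mem (hreach b hb),
    Finset.image_const hne, Finset.card_singleton]

theorem Reach.of_union {θ θ' : Finset (ℤ × ℤ)} (hadj : ∀ b ∈ θ, ∀ b' ∈ θ', ¬ Adjacent b b')
    {b x : ℤ × ℤ} (hb : b ∈ θ) (h : Reach (θ ∪ θ') b x) : Reach θ b x := by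
  induction h with
  | refl => exact .refl
  | tail _ hstep ih =>
    rcases Finset.mem_union.1 hstep.1 with h | h
    · exact ih.tail ⟨h, hstep.2⟩
    · exact absurd hstep.2 (hadj _ (Reach.mem hb ih) _ h)

theorem comps_union {θ θ' : Finset (ℤ × ℤ)} (hadj : ∀ b ∈ θ, ∀ b' ∈ θ', ¬ Adjacent b b') :
    comps (θ ∪ θ') = comps θ ∪ comps θ' := by
  have hcomp : ∀ {θ θ' : Finset (ℤ × ℤ)}, (∀ b ∈ θ, ∀ b' ∈ θ', ¬ Adjacent b b') → ∀ b ∈ θ,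
      ((θ ∪ θ').filter fun x => Reach (θ ∪ θ') b x) = θ.filter fun x => Reach θ b x := by
    intro θ θ' hadj b hb
    ext x
    simp only [Finset.mem_filter, Finset.mem_union]
    refine ⟨fun ⟨_, h⟩ => ?_, fun ⟨hx, h⟩ => ⟨.inl hx, h.mono Finset.subset_union_left⟩⟩
    have h := Reach.of_union hadj hb h
    exact ⟨Reach.mem hb h, h⟩
  have hadj' : ∀ b ∈ θ', ∀ b' ∈ θ, ¬ Adjacent b b' := fun b hb b' hb' h => hadj b' hb' b hb h.symm
  rw [comps, Finset.image_union, comps, comps]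
  congr 1
  · exact Finset.image_congr fun b hb => hcomp hadj b hb
  · exact Finset.image_congr fun b hb => by rw [Finset.union_comm]; exact hcomp hadj' b hb

theorem ncomp_union {θ θ' : Finset (ℤ × ℤ)} (hdisj : Disjoint θ θ')
    (hadj : ∀ b ∈ θ, ∀ b' ∈ θ', ¬ Adjacent b b') :
    Ncomp (θ ∪ θ') = Ncomp θ + Ncomp θ' := by
  have hsub : ∀ {θ : Finset (ℤ × ℤ)}, ∀ c ∈ comps θ, c ⊆ θ ∧ c.Nonempty := by
    intro θ c hc
    obtain ⟨b, hb, rfl⟩ := Finset.mem_image.1 hc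
    exact ⟨Finset.filter_subset _ _, b, Finset.mem_filter.2 ⟨hb, .refl⟩⟩
  rw [Ncomp, comps_union hadj, Finset.card_union_of_disjoint, Ncomp, Ncomp]
  refine Finset.disjoint_left.2 fun c hc hc' => ?_
  obtain ⟨b, hb⟩ := (hsub c hc).2
  exact Finset.disjoint_left.1 hdisj ((hsub c hc).1 hb) ((hsub c hc').1 hb)

theorem ncomp_image_Icc {f : ℤ → ℤ × ℤ} (hf : ∀ x, Adjacent (f x) (f (x + 1))) {c d : ℤ}
    (hcd : c ≤ d) : Ncomp ((Finset.Icc c d).image f) = 1 := by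
  set A := (Finset.Icc c d).image f
  have hmem : ∀ x, c ≤ x → x ≤ d → f x ∈ A := fun x h1 h2 =>
    Finset.mem_image_of_mem f (Finset.mem_Icc.2 ⟨h1, h2⟩)
  have hup : ∀ x, c ≤ x → ∀ y, x ≤ y → y ≤ d → Reach A (f x) (f y) := by
    intro x hx y hxy
    induction y, hxy using Int.leInduction with
    | base => exact fun _ => .refl
    | succ y hxy ih => exact fun hy => (ih (by omega)).tail ⟨hmem _ (by omega) hy, hf y⟩
  refine ncomp_eq_one ⟨f c, hmem c le_rfl hcd⟩ ?_
  simp only [A, Finset.mem_image, Finset.mem_Icc]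
  rintro _ ⟨x, hx, rfl⟩ _ ⟨y, hy, rfl⟩
  rcases le_total x y with hxy | hxy
  · exact hup x hx.1 y hxy hy.2
  · exact (hup y hy.1 x hxy hx.2).symm (hmem y hy.1 hy.2)

end Components

section Corners

theorem adjacent_succ_fst (b : ℤ × ℤ) : Adjacent b (b.1 + 1, b.2) := by
  simp [Adjacent]

theorem adjacent_succ_snd (b : ℤ × ℤ) : Adjacent b (b.1, b.2 + 1) := by
  simp [Adjacent]

theorem IsRim.dRim_eq {θ : Finset (ℤ × ℤ)} (h : IsRim θ) : dRim θ = θ.card := by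
  rw [dRim, ← h]

theorem IsRim.mono {θ φ : Finset (ℤ × ℤ)} (hθ : IsRim θ) (hφ : φ ⊆ θ) : IsRim φ := by
  have h : ∀ b ∈ θ, ∀ b' ∈ θ, ¬ (b.1 < b'.1 ∧ b.2 < b'.2) := fun b hb => by
    rw [hθ, seRim, Finset.mem_filter] at hb
    exact hb.2
  exact (Finset.filter_true_of_mem fun b hb b' hb' => h b (hφ hb) b' (hφ hb')).symm

theorem seCorners_subset (θ : Finset (ℤ × ℤ)) : seCorners θ ⊆ θ := Finset.filter_subset _ _

theorem seCorners_nonempty {θ : Finset (ℤ × ℤ)} (hne : θ.Nonempty) : (seCorners θ).Nonempty := by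
  obtain ⟨b, hb, hmax⟩ := Finset.exists_max_image θ (fun b => b.1 + b.2) hne
  refine ⟨b, Finset.mem_filter.2 ⟨hb, fun h => ?_, fun h => ?_⟩⟩ <;>
    · have := hmax _ h
      simp at this

theorem mem_seCorners_union_left {A B : Finset (ℤ × ℤ)}
    (hadj : ∀ b ∈ A, ∀ b' ∈ B, ¬ Adjacent b b') {b : ℤ × ℤ} (hb : b ∈ A) :
    b ∈ seCorners (A ∪ B) ↔ b ∈ seCorners A := by
  have h : ∀ x, Adjacent b x → (x ∈ A ∪ B ↔ x ∈ A) := fun x hx =>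
    ⟨fun h => (Finset.mem_union.1 h).resolve_right (hadj b hb x · hx), Finset.mem_union_left B⟩
  simp only [seCorners, Finset.mem_filter, h _ (adjacent_succ_fst b), h _ (adjacent_succ_snd b),
    Finset.mem_union_left B hb, hb, true_and]

theorem seCorners_union {A B : Finset (ℤ × ℤ)} (hadj : ∀ b ∈ A, ∀ b' ∈ B, ¬ Adjacent b b') :
    seCorners (A ∪ B) = seCorners A ∪ seCorners B := by
  have hadj' : ∀ b ∈ B, ∀ b' ∈ A, ¬ Adjacent b b' := fun b hb b' hb' h => hadj b' hb' b hb h.symm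
  have hright : ∀ {b}, b ∈ B → (b ∈ seCorners (A ∪ B) ↔ b ∈ seCorners B) := fun hb => by
    rw [Finset.union_comm]
    exact mem_seCorners_union_left hadj' hb
  ext b
  rw [Finset.mem_union]
  constructor
  · intro h
    rcases Finset.mem_union.1 (seCorners_subset _ h) with hb | hb
    · exact .inl ((mem_seCorners_union_left hadj hb).1 h)
    · exact .inr ((hright hb).1 h)
  · rintro (h | h)
    · exact (mem_seCorners_union_left hadj (seCorners_subset _ h)).2 h
    · exact (hright (seCorners_subset _ h)).2 h

noncomputable def cornerSum (F : Finset (ℤ × ℤ) → ℤ) (θ : Finset (ℤ × ℤ)) : ℤ :=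
  ∑ S ∈ (seCorners θ).powerset, (-1) ^ S.card * F (θ \ S)

theorem cornerSum_congr {F G : Finset (ℤ × ℤ) → ℤ} {θ : Finset (ℤ × ℤ)}
    (h : ∀ X ⊆ θ, F X = G X) : cornerSum F θ = cornerSum G θ :=
  Finset.sum_congr rfl fun S _ => by rw [h _ Finset.sdiff_subset]

theorem cornerSum_sub (F G : Finset (ℤ × ℤ) → ℤ) (θ : Finset (ℤ × ℤ)) :
    cornerSum (fun X => F X - G X) θ = cornerSum F θ - cornerSum G θ := by
  simp only [cornerSum, mul_sub, Finset.sum_sub_distrib]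

theorem cornerSum_const_mul (k : ℤ) (F : Finset (ℤ × ℤ) → ℤ) (θ : Finset (ℤ × ℤ)) :
    cornerSum (fun X => k * F X) θ = k * cornerSum F θ := by
  simp only [cornerSum, Finset.mul_sum]
  exact Finset.sum_congr rfl fun _ _ => by ring

theorem cornerSum_const {θ : Finset (ℤ × ℤ)} (hθ : θ.Nonempty) (k : ℤ) :
    cornerSum (fun _ => k) θ = 0 := by
  rw [cornerSum, ← Finset.sum_mul, Finset.sum_powerset_neg_one_pow_card,
    if_neg (seCorners_nonempty hθ).ne_empty, zero_mul]

theorem cornerSum_union {A φ : Finset (ℤ × ℤ)} {c : ℤ × ℤ} (hdisj : Disjoint A φ)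
    (hadj : ∀ b ∈ A, ∀ b' ∈ φ, ¬ Adjacent b b') (hcA : seCorners A = {c})
    (F : Finset (ℤ × ℤ) → ℤ) :
    cornerSum F (A ∪ φ) =
      cornerSum (fun X => F (A ∪ X)) φ - cornerSum (fun X => F (A.erase c ∪ X)) φ := by
  have hcA' : c ∈ A := seCorners_subset A (hcA ▸ Finset.mem_singleton_self c)
  have hcφ : c ∉ φ := Finset.disjoint_left.1 hdisj hcA'
  rw [cornerSum, seCorners_union hadj, hcA, Finset.singleton_union,
    Finset.sum_powerset_insert fun h => hcφ (seCorners_subset φ h), cornerSum, cornerSum,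
    sub_eq_add_neg, ← Finset.sum_neg_distrib]
  congr 1 <;> refine Finset.sum_congr rfl fun S hS => ?_
  all_goals
    have hSA : ∀ x ∈ S, x ∉ A := fun x hx =>
      Finset.disjoint_right.1 hdisj (seCorners_subset φ (Finset.mem_powerset.1 hS hx))
  · congr 2
    ext x
    grind
  · rw [Finset.card_insert_of_notMem fun h => hSA c h hcA', pow_succ]
    have : (A ∪ φ) \ insert c S = A.erase c ∪ φ \ S := by
      ext x
      grind
    rw [this]
    ring

end Corners

section Coefficients

theorem Bcoef_eq_cornerSum (θ : Finset (ℤ × ℤ)) (p : ℤ) :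
    Bcoef θ p = cornerSum (fun X => hcoef (Nminus X) ((dRim X : ℤ) - p)) θ := rfl

noncomputable def BcoefComp (θ : Finset (ℤ × ℤ)) (p : ℤ) : ℤ :=
  cornerSum (fun X => hcoef (Ncomp X) ((dRim X : ℤ) - p)) θ

theorem cornerSum_hcoef_of_nonpos {θ : Finset (ℤ × ℤ)} (hrim : IsRim θ) (hne : θ.Nonempty)
    {f : Finset (ℤ × ℤ) → ℕ} (hf : ∀ X, f X ≤ X.card) {p : ℤ} (hp : p ≤ 0) :
    cornerSum (fun X => hcoef (f X) ((dRim X : ℤ) - p)) θ = 0 := by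
  rw [cornerSum_congr (G := fun _ => 1) fun X hX => ?_, cornerSum_const hne]
  rw [(hrim.mono hX).dRim_eq]
  exact hcoef_of_le (by have := hf X; omega)

theorem Bcoef_of_nonpos {θ : Finset (ℤ × ℤ)} (hrim : IsRim θ) (hne : θ.Nonempty) {p : ℤ}
    (hp : p ≤ 0) : Bcoef θ p = 0 :=
  cornerSum_hcoef_of_nonpos hrim hne (fun X => (Nat.sub_le _ _).trans (ncomp_le_card X)) hp

theorem BcoefComp_of_nonpos {θ : Finset (ℤ × ℤ)} (hrim : IsRim θ) (hne : θ.Nonempty) {p : ℤ}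
    (hp : p ≤ 0) : BcoefComp θ p = 0 :=
  cornerSum_hcoef_of_nonpos hrim hne ncomp_le_card hp

theorem BcoefComp_eq {θ : Finset (ℤ × ℤ)} (hrim : IsRim θ) {p : ℤ} (hp : p ≠ 0) :
    BcoefComp θ p = 2 * Bcoef θ p - Bcoef θ (p + 1) := by
  rw [Bcoef_eq_cornerSum, Bcoef_eq_cornerSum, ← cornerSum_const_mul, ← cornerSum_sub, BcoefComp]
  refine cornerSum_congr fun X hX => ?_
  rw [(hrim.mono hX).dRim_eq, hcoef_eq_two_mul_sub, sub_sub]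
  · rfl
  · intro h
    simpa [ncomp_eq_zero_iff.1 h] using hp

theorem BcoefComp_sub_BcoefComp {θ : Finset (ℤ × ℤ)} (hrim : IsRim θ) (hne : θ.Nonempty) {q : ℤ}
    (hq : 0 ≤ q) :
    BcoefComp θ q - BcoefComp θ (q + 1) =
      (2 - if q = 0 then 1 else 0) * (Bcoef θ q - Bcoef θ (q + 1)) +
        (Bcoef θ (q + 2) - Bcoef θ (q + 1)) := by
  rw [BcoefComp_eq hrim (by omega : q + 1 ≠ 0), add_assoc, one_add_one_eq_two]
  rcases hq.eq_or_lt with rfl | hq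
  · rw [BcoefComp_of_nonpos hrim hne le_rfl, Bcoef_of_nonpos hrim hne le_rfl, if_pos rfl]
    ring
  · rw [BcoefComp_eq hrim hq.ne', if_neg hq.ne']
    ring

theorem BcoefComp_sub_Bcoef {θ : Finset (ℤ × ℤ)} (hrim : IsRim θ) (hne : θ.Nonempty) {q : ℤ}
    (hq : 0 ≤ q) :
    BcoefComp θ q - Bcoef θ (q + 1) =
      (2 - if q = 0 then 1 else 0) * (Bcoef θ q - Bcoef θ (q + 1)) := by
  rcases hq.eq_or_lt with rfl | hq
  · rw [BcoefComp_of_nonpos hrim hne le_rfl, Bcoef_of_nonpos hrim hne le_rfl, if_pos rfl]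
    ring
  · rw [BcoefComp_eq hrim hq.ne', if_neg hq.ne']
    ring

theorem nminus_union {A X : Finset (ℤ × ℤ)} (hdisj : Disjoint A X)
    (hadj : ∀ b ∈ A, ∀ b' ∈ X, ¬ Adjacent b b') (hA : Ncomp A = 1) :
    Nminus (A ∪ X) = Ncomp X := by
  rw [Nminus, ncomp_union hdisj hadj, hA, Nat.add_sub_cancel_left]

theorem cornerSum_nminus_union {A φ : Finset (ℤ × ℤ)} (hrim : IsRim (A ∪ φ))
    (hdisj : Disjoint A φ) (hadj : ∀ b ∈ A, ∀ b' ∈ φ, ¬ Adjacent b b') (hA : Ncomp A = 1)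
    (p : ℤ) :
    cornerSum (fun X => hcoef (Nminus (A ∪ X)) ((dRim (A ∪ X) : ℤ) - p)) φ =
      BcoefComp φ (p - A.card) := by
  refine cornerSum_congr fun X hX => ?_
  have hdisjX : Disjoint A X := hdisj.mono_right hX
  rw [nminus_union hdisjX (fun b hb b' hb' => hadj b hb b' (hX hb')) hA,
    (hrim.mono (Finset.union_subset_union subset_rfl hX)).dRim_eq,
    (hrim.mono (hX.trans Finset.subset_union_right)).dRim_eq,
    Finset.card_union_of_disjoint hdisjX]
  push_cast
  ring_nf

theorem Bcoef_union_eq {A φ : Finset (ℤ × ℤ)} {c : ℤ × ℤ} (hrim : IsRim (A ∪ φ))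
    (hdisj : Disjoint A φ) (hadj : ∀ b ∈ A, ∀ b' ∈ φ, ¬ Adjacent b b')
    (hcA : seCorners A = {c}) (hA : Ncomp A = 1) (hA' : Ncomp (A.erase c) = 1) (p : ℤ) :
    Bcoef (A ∪ φ) p = BcoefComp φ (p - A.card) - BcoefComp φ (p - A.card + 1) := by
  have hc : c ∈ A := seCorners_subset A (hcA ▸ Finset.mem_singleton_self c)
  have hcard : ((A.erase c).card : ℤ) = A.card - 1 := by
    rw [Finset.card_erase_of_mem hc, Nat.cast_sub (Finset.card_pos.2 ⟨c, hc⟩), Nat.cast_one]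
  have herase : A.erase c ⊆ A := Finset.erase_subset c A
  rw [Bcoef_eq_cornerSum, cornerSum_union hdisj hadj hcA,
    cornerSum_nminus_union hrim hdisj hadj hA,
    cornerSum_nminus_union (hrim.mono (Finset.union_subset_union herase subset_rfl))
      (hdisj.mono_left herase) (fun b hb => hadj b (herase hb)) hA',
    hcard, sub_sub_eq_add_sub, add_sub_right_comm]

theorem Bcoef_insert_eq {φ : Finset (ℤ × ℤ)} {c : ℤ × ℤ} (hrim : IsRim (insert c φ))
    (hc : c ∉ φ) (hadj : ∀ b ∈ φ, ¬ Adjacent c b) (p : ℤ) :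
    Bcoef (insert c φ) p = BcoefComp φ (p - 1) - Bcoef φ p := by
  rw [Finset.insert_eq] at hrim ⊢
  have hdisj : Disjoint {c} φ := Finset.disjoint_singleton_left.2 hc
  have hadj' : ∀ b ∈ ({c} : Finset (ℤ × ℤ)), ∀ b' ∈ φ, ¬ Adjacent b b' := by
    simpa using hadj
  have hcA : seCorners {c} = {c} := by simp [seCorners, Prod.ext_iff]
  rw [Bcoef_eq_cornerSum, cornerSum_union hdisj hadj' hcA,
    cornerSum_nminus_union hrim hdisj hadj' (ncomp_singleton c), Finset.card_singleton,
    Nat.cast_one, Finset.erase_singleton]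
  simp only [Finset.empty_union]
  rfl

theorem Bcoef_union_of_not_adjacent {A φ : Finset (ℤ × ℤ)} {c : ℤ × ℤ} (hrim : IsRim (A ∪ φ))
    (hdisj : Disjoint A φ) (hadj : ∀ b ∈ A, ∀ b' ∈ φ, ¬ Adjacent b b') (hφ : φ.Nonempty)
    (hA : A = {c} ∨ (seCorners A = {c} ∧ Ncomp A = 1 ∧ Ncomp (A.erase c) = 1))
    {p : ℤ} (hp : 1 ≤ p) :
    (p < A.card → Bcoef (A ∪ φ) p = 0) ∧
    (A.card ≤ p → Bcoef (A ∪ φ) p =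
      (2 - if p = A.card then 1 else 0) * (Bcoef φ (p - A.card) - Bcoef φ (p - A.card + 1)) +
      (1 - if (A.card : ℤ) = 1 then 1 else 0) *
        (Bcoef φ (p - A.card + 2) - Bcoef φ (p - A.card + 1))) := by
  have hrimφ : IsRim φ := hrim.mono Finset.subset_union_right
  rcases hA with rfl | ⟨hcA, hA, hA'⟩
  · rw [← Finset.insert_eq] at hrim ⊢
    rw [Bcoef_insert_eq hrim (Finset.disjoint_singleton_left.1 hdisj) (by simpa using hadj)]
    refine ⟨fun h => by rw [Finset.card_singleton] at h; omega, fun _ => ?_⟩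
    have := BcoefComp_sub_Bcoef hrimφ hφ (q := p - 1) (by omega)
    simp only [sub_add_cancel, sub_eq_zero] at this
    simpa using this
  · have hcard : 2 ≤ A.card := by
      have := Finset.card_erase_add_one (seCorners_subset A (hcA ▸ Finset.mem_singleton_self c))
      have := ncomp_le_card (A.erase c)
      omega
    rw [Bcoef_union_eq hrim hdisj hadj hcA hA hA']
    refine ⟨fun h => ?_, fun h => ?_⟩
    · rw [BcoefComp_of_nonpos hrimφ hφ (by omega), BcoefComp_of_nonpos hrimφ hφ (by omega),
        sub_zero]
    · rw [BcoefComp_sub_BcoefComp hrimφ hφ (by omega), if_neg (show (A.card : ℤ) ≠ 1 by omega)]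
      simp only [sub_eq_zero]
      ring

end Coefficients

section Arm

theorem IsStrictPartition.apply_add_le {n : ℕ} {lam : ℤ → ℤ} (h : IsStrictPartition n lam)
    {i i' : ℤ} (hi : 1 ≤ i) (hii' : i ≤ i') (hpos : 0 < lam i') : lam i' + i' ≤ lam i + i := by
  induction i', hii' using Int.leInduction with
  | base => exact le_rfl
  | succ i' hii' ih =>
    have := h.2.2 i' (by omega)
    have := ih (by omega)
    omega

theorem mem_shiftedD {n : ℕ} {lam : ℤ → ℤ} {b : ℤ × ℤ} :
    b ∈ shiftedD n lam ↔ 1 ≤ b.1 ∧ b.1 ≤ n ∧ 1 ≤ b.2 ∧ b.2 ≤ 2 * n ∧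
      b.1 ≤ b.2 ∧ b.2 ≤ lam b.1 + b.1 - 1 := by
  simp only [shiftedD, Finset.mem_filter, Finset.mem_product, Finset.mem_Icc]
  tauto

theorem IsShiftedSkewDiagram.mem_of_mem_row {n : ℕ} {θ : Finset (ℤ × ℤ)}
    (hθ : IsShiftedSkewDiagram n θ) {i j₁ j₂ j : ℤ} (h₁ : (i, j₁) ∈ θ) (h₂ : (i, j₂) ∈ θ)
    (hj₁ : j₁ ≤ j) (hj₂ : j ≤ j₂) : (i, j) ∈ θ := by
  obtain ⟨lam, nu, -, -, -, rfl⟩ := hθ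
  simp only [Finset.mem_sdiff, mem_shiftedD] at h₁ h₂ ⊢
  omega

theorem IsShiftedSkewDiagram.mem_of_mem_col {n : ℕ} {θ : Finset (ℤ × ℤ)}
    (hθ : IsShiftedSkewDiagram n θ) {j i₁ i₂ i : ℤ} (h₁ : (i₁, j) ∈ θ) (h₂ : (i₂, j) ∈ θ)
    (hi₁ : i₁ ≤ i) (hi₂ : i ≤ i₂) : (i, j) ∈ θ := by
  obtain ⟨lam, nu, hlam, hnu, -, rfl⟩ := hθ
  simp only [Finset.mem_sdiff, mem_shiftedD] at h₁ h₂ ⊢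
  have hnu' := hnu.apply_add_le (i := i) (i' := i₂) (by omega) hi₂ (by omega)
  have hlam' := fun hpos => hlam.apply_add_le (i := i₁) (i' := i) (by omega) hi₁ hpos
  omega

theorem seCorners_image_row (i : ℤ) {c d : ℤ} (hcd : c ≤ d) :
    seCorners ((Finset.Icc c d).image fun j => (i, j)) = {(i, d)} := by
  ext ⟨x, y⟩
  simp [seCorners]
  omega

theorem seCorners_image_col (j : ℤ) {c d : ℤ} (hcd : c ≤ d) :
    seCorners ((Finset.Icc c d).image fun i => (i, j)) = {(d, j)} := by
  ext ⟨x, y⟩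
  simp [seCorners]
  omega

theorem image_Icc_eq_singleton_or {f : ℤ → ℤ × ℤ} (hf : ∀ x, Adjacent (f x) (f (x + 1)))
    (hinj : Function.Injective f) {c d : ℤ} (hcd : c ≤ d)
    (hcorner : seCorners ((Finset.Icc c d).image f) = {f d}) :
    (Finset.Icc c d).image f = {f d} ∨
      (seCorners ((Finset.Icc c d).image f) = {f d} ∧ Ncomp ((Finset.Icc c d).image f) = 1 ∧
        Ncomp (((Finset.Icc c d).image f).erase (f d)) = 1) := by
  rcases hcd.eq_or_lt with rfl | hcd
  · simp
  · refine .inr ⟨hcorner, ncomp_image_Icc hf hcd.le, ?_⟩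
    rw [← Finset.image_erase hinj, Finset.Icc_erase_right, ← Finset.Icc_sub_one_right_eq_Ico]
    exact ncomp_image_Icc hf (by omega)

theorem mem_armAt {θ : Finset (ℤ × ℤ)} {i0 j0 : ℤ} {s : ℕ} {b : ℤ × ℤ} :
    b ∈ armAt θ i0 j0 s ↔
      b ∈ θ ∧ i0 ≤ b.1 ∧ b.1 ≤ i0 + s - 1 ∧ j0 - s + 1 ≤ b.2 ∧ b.2 ≤ j0 :=
  Finset.mem_filter

theorem armAt_eq_image_row {n : ℕ} {θ : Finset (ℤ × ℤ)} (hθ : IsShiftedSkewDiagram n θ)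
    {i0 j0 : ℤ} (hbox : (i0, j0) ∈ θ) {s : ℕ} (hs : 1 ≤ s) (hrow : IsRow (armAt θ i0 j0 s)) :
    ∃ c ≤ j0, armAt θ i0 j0 s = (Finset.Icc c j0).image fun j => (i0, j) := by
  have hA0 : (i0, j0) ∈ armAt θ i0 j0 s := mem_armAt.2 ⟨hbox, by omega⟩
  obtain ⟨i, hi⟩ := hrow
  have hrow' : ∀ b ∈ armAt θ i0 j0 s, b.1 = i0 := fun b hb => (hi b hb).trans (hi _ hA0).symm
  obtain ⟨⟨i', c⟩, hc, hmin⟩ := Finset.exists_min_image _ Prod.snd ⟨_, hA0⟩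
  obtain rfl : i' = i0 := hrow' _ hc
  refine ⟨c, hmin _ hA0, ?_⟩
  ext ⟨x, y⟩
  simp only [Finset.mem_image, Finset.mem_Icc, Prod.mk.injEq]
  constructor
  · intro h
    exact ⟨y, ⟨hmin _ h, (mem_armAt.1 h).2.2.2.2⟩, (hrow' _ h).symm, rfl⟩
  · rintro ⟨j, ⟨hcj, hj0⟩, rfl, rfl⟩
    have hc' := mem_armAt.1 hc
    exact mem_armAt.2 ⟨hθ.mem_of_mem_row hc'.1 hbox hcj hj0, by simp only at hc' ⊢; omega⟩

theorem armAt_eq_image_col {n : ℕ} {θ : Finset (ℤ × ℤ)} (hθ : IsShiftedSkewDiagram n θ)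
    {i0 j0 : ℤ} (hbox : (i0, j0) ∈ θ) {s : ℕ} (hs : 1 ≤ s) (hcol : IsCol (armAt θ i0 j0 s)) :
    ∃ r ≥ i0, armAt θ i0 j0 s = (Finset.Icc i0 r).image fun i => (i, j0) := by
  have hA0 : (i0, j0) ∈ armAt θ i0 j0 s := mem_armAt.2 ⟨hbox, by omega⟩
  obtain ⟨j, hj⟩ := hcol
  have hcol' : ∀ b ∈ armAt θ i0 j0 s, b.2 = j0 := fun b hb => (hj b hb).trans (hj _ hA0).symm
  obtain ⟨⟨r, j'⟩, hr, hmax⟩ := Finset.exists_max_image _ Prod.fst ⟨_, hA0⟩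
  obtain rfl : j' = j0 := hcol' _ hr
  refine ⟨r, hmax _ hA0, ?_⟩
  ext ⟨x, y⟩
  simp only [Finset.mem_image, Finset.mem_Icc, Prod.mk.injEq]
  constructor
  · intro h
    exact ⟨x, ⟨(mem_armAt.1 h).2.1, hmax _ h⟩, rfl, (hcol' _ h).symm⟩
  · rintro ⟨i, ⟨hi0, hir⟩, rfl, rfl⟩
    have hr' := mem_armAt.1 hr
    exact mem_armAt.2 ⟨hθ.mem_of_mem_col hbox hr'.1 hi0 hir, by simp only at hr' ⊢; omega⟩

theorem armAt_eq_singleton_or {n : ℕ} {θ : Finset (ℤ × ℤ)} (hθ : IsShiftedSkewDiagram n θ)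
    {i0 j0 : ℤ} (hbox : (i0, j0) ∈ θ) {s : ℕ} (hs : 1 ≤ s) (harm : IsRowOrCol (armAt θ i0 j0 s)) :
    ∃ c, armAt θ i0 j0 s = {c} ∨
      (seCorners (armAt θ i0 j0 s) = {c} ∧ Ncomp (armAt θ i0 j0 s) = 1 ∧
        Ncomp ((armAt θ i0 j0 s).erase c) = 1) := by
  rcases harm with hrow | hcol
  · obtain ⟨c, hc, hA⟩ := armAt_eq_image_row hθ hbox hs hrow
    rw [hA]
    exact ⟨_, image_Icc_eq_singleton_or (fun j => adjacent_succ_snd (i0, j))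
      (fun _ _ h => (Prod.mk.inj h).2) hc (seCorners_image_row i0 hc)⟩
  · obtain ⟨r, hr, hA⟩ := armAt_eq_image_col hθ hbox hs hcol
    rw [hA]
    exact ⟨_, image_Icc_eq_singleton_or (fun i => adjacent_succ_fst (i, j0))
      (fun _ _ h => (Prod.mk.inj h).1) hr (seCorners_image_col j0 hr)⟩

end Arm

theorem Bcoef_arm_disconnected_general (n : ℕ) (θ : Finset (ℤ × ℤ))
    (hθ : IsShiftedSkewDiagram n θ) (hrim : IsRim θ)
    (i0 j0 : ℤ) (hbox : (i0, j0) ∈ θ)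
    (s : ℕ) (hs : 1 ≤ s) (harm : IsRowOrCol (armAt θ i0 j0 s))
    (θhat : Finset (ℤ × ℤ)) (hθhat : θhat = θ \ armAt θ i0 j0 s)
    (hhatne : θhat.Nonempty)
    (hconn : ¬ ∃ b ∈ armAt θ i0 j0 s, ∃ b' ∈ θhat, Adjacent b b')
    (a : ℤ) (ha : a = (θ.card : ℤ) - (θhat.card : ℤ))
    (p : ℤ) (hp : 1 ≤ p) :
    (p < a → Bcoef θ p = 0) ∧
    (a ≤ p → Bcoef θ p =
      (2 - if p = a then 1 else 0) * (Bcoef θhat (p - a) - Bcoef θhat (p - a + 1)) +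
      (1 - if a = 1 then 1 else 0) * (Bcoef θhat (p - a + 2) - Bcoef θhat (p - a + 1))) := by
  have hAθ : armAt θ i0 j0 s ⊆ θ := Finset.filter_subset _ _
  obtain ⟨c, hA⟩ := armAt_eq_singleton_or hθ hbox hs harm
  generalize armAt θ i0 j0 s = A at *
  have hθA : θ = A ∪ θhat := by rw [hθhat, Finset.union_sdiff_of_subset hAθ]
  have hdisj : Disjoint A θhat := hθhat ▸ Finset.disjoint_sdiff
  obtain rfl : a = A.card := by
    rw [ha, hθA, Finset.card_union_of_disjoint hdisj]
    push_cast
    ring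
  rw [hθA] at hrim ⊢
  exact Bcoef_union_of_not_adjacent hrim hdisj (fun b hb b' hb' h => hconn ⟨b, hb, b', hb', h⟩)
    hhatne hA hp

/-- Let `θ` be a nonempty rim whose north-east arm is not connected to
`θ̂ = θ` minus the arm, with `θ̂ ≠ ∅` and `a = |θ| - |θ̂|`.  Then for every
integer `p ≥ 1`: if `p < a` then `B(θ,p) = 0`, and if `p ≥ a` then
`B(θ,p) = (2 - δ_{p,a})·(B(θ̂,p-a) - B(θ̂,p-a+1))
          + (1 - δ_{a,1})·(B(θ̂,p-a+2) - B(θ̂,p-a+1))`. -/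
theorem Bcoef_arm_disconnected (n : ℕ) (hn : 0 < n) (θ : Finset (ℤ × ℤ))
    (hθ : IsShiftedSkewDiagram n θ) (hrim : IsRim θ) (hne : θ.Nonempty)
    (i0 j0 : ℤ) (hbox : (i0, j0) ∈ θ) (htop : ∀ b ∈ θ, i0 ≤ b.1)
    (hright : ∀ b ∈ θ, b.1 = i0 → b.2 ≤ j0)
    (s : ℕ) (hs : 1 ≤ s) (harm : IsRowOrCol (armAt θ i0 j0 s))
    (hmax : ∀ s' : ℕ, 1 ≤ s' → IsRowOrCol (armAt θ i0 j0 s') → s' ≤ s)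
    (θhat : Finset (ℤ × ℤ)) (hθhat : θhat = θ \ armAt θ i0 j0 s)
    (hhatne : θhat.Nonempty)
    (hconn : ¬ ∃ b ∈ armAt θ i0 j0 s, ∃ b' ∈ θhat, Adjacent b b')
    (a : ℤ) (ha : a = (θ.card : ℤ) - (θhat.card : ℤ))
    (p : ℤ) (hp : 1 ≤ p) :
    (p < a → Bcoef θ p = 0) ∧
    (a ≤ p → Bcoef θ p =
      (2 - if p = a then 1 else 0) * (Bcoef θhat (p - a) - Bcoef θhat (p - a + 1)) +
      (1 - if a = 1 then 1 else 0) * (Bcoef θhat (p - a + 2) - Bcoef θhat (p - a + 1))) :=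
  Bcoef_arm_disconnected_general n θ hθ hrim i0 j0 hbox s hs harm θhat hθhat hhatne hconn a ha p hp
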